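/- Let G be a connected multigraph with τ(G) ≥ k. Then {e ∈ E(G) : τ(G−e) ≥ k} = ∅ if and only if d(G) = k, i.e. |E(G)| = k(|V(G)|−1). -/

import Mathlib

open Finset

/-- A finite multigraph: a finite vertex set, a finite set of edge names,
and an endpoint assignment sending each edge to an unordered pair of vertices. -/
structure MG (α β : Type) where
  verts : Finset α
  edges : Finset β
  ends : β → Sym2 α
  wf : ∀ e ∈ edges, ∀ v ∈ ends e, v ∈ verts

variable {α β : Type} [DecidableEq α] [DecidableEq β]

namespace MG

def Adj (G : MG α β) (a b : α) : Prop := ∃ e ∈ G.edges, G.ends e = s(a, b)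

def Reach (G : MG α β) : α → α → Prop := Relation.ReflTransGen G.Adj

def Connected (G : MG α β) : Prop :=
  G.verts.Nonempty ∧ ∀ a ∈ G.verts, ∀ b ∈ G.verts, G.Reach a b

/-- Number of connected components. -/
noncomputable def omega (G : MG α β) : ℕ :=
  ((fun v => {u | G.Reach v u}) '' (G.verts : Set α)).ncard

def deleteEdges (G : MG α β) (X : Finset β) : MG α β :=
  ⟨G.verts, G.edges \ X, G.ends, fun e he => G.wf e (Finset.mem_sdiff.mp he).1⟩

def IsSubgraph (H G : MG α β) : Prop :=
  H.verts ⊆ G.verts ∧ H.edges ⊆ G.edges ∧ ∀ e ∈ H.edges, H.ends e = G.ends e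

def IsSpanningTree (G T : MG α β) : Prop :=
  IsSubgraph T G ∧ T.verts = G.verts ∧ T.Connected ∧ T.edges.card = T.verts.card - 1

/-- `G` contains `m` pairwise edge-disjoint spanning trees. -/
def HasTrees (G : MG α β) (m : ℕ) : Prop :=
  ∃ T : Fin m → MG α β, (∀ i, IsSpanningTree G (T i)) ∧
    ∀ i j, i ≠ j → Disjoint (T i).edges (T j).edges

/-- Maximum number of pairwise edge-disjoint spanning trees. -/
noncomputable def tau (G : MG α β) : ℕ := sSup {m | G.HasTrees m}

noncomputable def taubar (G : MG α β) : ℕ :=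
  sSup {m | ∃ H : MG α β, IsSubgraph H G ∧ H.Connected ∧ tau H = m}

/-- Edge connectivity: the least size of an edge set whose deletion disconnects. -/
noncomputable def kappa (G : MG α β) : ℕ :=
  sInf {n | ∃ X ⊆ G.edges, X.card = n ∧ ¬ (G.deleteEdges X).Connected}

noncomputable def kappabar (G : MG α β) : ℕ :=
  sSup {n | ∃ H : MG α β, IsSubgraph H G ∧ kappa H = n}

/-- Density `|E(G)| / (|V(G)| - ω(G))`. -/
noncomputable def dens (G : MG α β) : ℝ :=
  (G.edges.card : ℝ) / ((G.verts.card : ℝ) - (G.omega : ℝ))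

/-- Maximum density over nontrivial subgraphs. -/
noncomputable def gamma (G : MG α β) : ℝ :=
  sSup {x : ℝ | ∃ H : MG α β, IsSubgraph H G ∧ H.edges.Nonempty ∧ dens H = x}

noncomputable def eta (G : MG α β) : ℝ :=
  sInf {x : ℝ | ∃ X : Finset β, X ⊆ G.edges ∧ G.omega < (G.deleteEdges X).omega ∧
    x = (X.card : ℝ) / (((G.deleteEdges X).omega : ℝ) - (G.omega : ℝ))}

/-- A (minimal) edge cut. -/
def IsEdgeCut (G : MG α β) (X : Finset β) : Prop :=
  X ⊆ G.edges ∧ ¬ (G.deleteEdges X).Connected ∧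
    ∀ Y : Finset β, Y ⊂ X → (G.deleteEdges Y).Connected

def addEdge (G : MG α β) (e : β) (a b : α) (ha : a ∈ G.verts) (hb : b ∈ G.verts) :
    MG α β :=
  ⟨G.verts, insert e G.edges, Function.update G.ends e s(a, b), by
    intro f hf v hv
    by_cases hfe : f = e
    · subst hfe
      rw [Function.update_self] at hv
      rcases Sym2.mem_iff.mp hv with h | h <;> subst h <;> assumption
    · rw [Function.update_of_ne hfe] at hv
      exact G.wf f ((Finset.mem_insert.mp hf).resolve_left hfe) v hv⟩

/-- `G` is `k`-maximal: every subgraph has edge connectivity at most `k`, but adding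
any new edge between two distinct vertices creates a subgraph of edge connectivity
at least `k+1`. -/
def IsKMaximal (k : ℕ) (G : MG α β) : Prop :=
  G.kappabar ≤ k ∧
    ∀ (e : β) (_ : e ∉ G.edges) (a b : α) (ha : a ∈ G.verts) (hb : b ∈ G.verts),
      a ≠ b → k + 1 ≤ (G.addEdge e a b ha hb).kappabar

def IsK1 (G : MG α β) : Prop := G.verts.card = 1 ∧ G.edges = ∅

/-- `G` is the `k`-edge-join of `G₁` and `G₂`. -/
def IsEdgeJoin (G G₁ G₂ : MG α β) (k : ℕ) : Prop :=
  Disjoint G₁.verts G₂.verts ∧ IsSubgraph G₁ G ∧ IsSubgraph G₂ G ∧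
  G.verts = G₁.verts ∪ G₂.verts ∧
  ∃ K : Finset β, K.card = k ∧ Disjoint K (G₁.edges ∪ G₂.edges) ∧
    G.edges = G₁.edges ∪ G₂.edges ∪ K ∧
    ∀ e ∈ K, ∃ a ∈ G₁.verts, ∃ b ∈ G₂.verts, G.ends e = s(a, b)

def UniformlyDense (G : MG α β) (k : ℕ) : Prop := dens G = k ∧ gamma G = k

/-- Membership in `𝓕_{k,n}` : `κ' = τ = k`, `n` vertices, with `|E|` minimized. -/
def InFkn (G : MG α β) (k n : ℕ) : Prop :=
  kappa G = k ∧ tau G = k ∧ G.verts.card = n ∧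
    ∀ H : MG α β, kappa H = k ∧ tau H = k ∧ H.verts.card = n →
      G.edges.card ≤ H.edges.card

def InFk (G : MG α β) (k : ℕ) : Prop := ∃ n, 1 < n ∧ InFkn G k n

end MG

namespace MG

lemma hasTrees_zero (G : MG α β) : G.HasTrees 0 :=
  ⟨Fin.elim0, fun i => i.elim0, fun i => i.elim0⟩

lemma hasTrees_mono {G : MG α β} {m k : ℕ} (h : G.HasTrees m) (hkm : k ≤ m) :
    G.HasTrees k := by
  obtain ⟨T, h1, h2⟩ := h
  exact ⟨fun i => T (Fin.castLE hkm i), fun i => h1 _, fun i j hij =>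
    h2 _ _ (fun h => hij (Fin.castLE_injective hkm h))⟩

lemma hasTrees_of_le_tau {G : MG α β} {k : ℕ} (h : k ≤ G.tau) : G.HasTrees k := by
  by_cases hb : BddAbove {m | G.HasTrees m}
  · have hne : {m | G.HasTrees m}.Nonempty := ⟨0, hasTrees_zero G⟩
    exact hasTrees_mono (Nat.sSup_mem hne hb) h
  · obtain ⟨m, hm, hkm⟩ := (not_bddAbove_iff.mp hb) k
    exact hasTrees_mono hm hkm.le

lemma bddAbove_hasTrees {G : MG α β} (h2 : 2 ≤ G.verts.card) :
    BddAbove {m | G.HasTrees m} := by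
  refine ⟨G.edges.card, fun m hm => ?_⟩
  obtain ⟨T, h1, hdisj⟩ := hm
  have hpick : ∀ i : Fin m, ∃ e, e ∈ (T i).edges := by
    intro i
    have hv : (T i).verts = G.verts := (h1 i).2.1
    have hc : (T i).edges.card = (T i).verts.card - 1 := (h1 i).2.2.2
    have hpos : 0 < (T i).edges.card := by rw [hc, hv]; omega
    obtain ⟨e, he⟩ := Finset.card_pos.mp hpos
    exact ⟨e, he⟩
  choose f hf using hpick
  have hmem : ∀ i ∈ (Finset.univ : Finset (Fin m)), f i ∈ G.edges :=
    fun i _ => (h1 i).1.2.1 (hf i)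
  have hinj : Set.InjOn f (Finset.univ : Finset (Fin m)) := by
    intro i _ j _ hij
    by_contra hne
    exact Finset.disjoint_left.mp (hdisj i j hne) (hf i) (hij ▸ hf j)
  simpa using Finset.card_le_card_of_injOn f hmem hinj

lemma biUnion_card {G : MG α β} {k : ℕ} (T : Fin k → MG α β)
    (h1 : ∀ i, G.IsSpanningTree (T i))
    (h2 : ∀ i j, i ≠ j → Disjoint (T i).edges (T j).edges) :
    (Finset.univ.biUnion fun i => (T i).edges).card = k * (G.verts.card - 1) ∧
    (Finset.univ.biUnion fun i => (T i).edges) ⊆ G.edges := by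
  constructor
  · rw [Finset.card_biUnion (fun i _ j _ hij => h2 i j hij)]
    have hc : ∀ i : Fin k, (T i).edges.card = G.verts.card - 1 := fun i => by
      rw [(h1 i).2.2.2, (h1 i).2.1]
    simp [hc, Finset.sum_const, mul_comm]
  · intro e he
    obtain ⟨i, _, hei⟩ := Finset.mem_biUnion.mp he
    exact (h1 i).1.2.1 hei

lemma two_le_verts {G : MG α β} {k : ℕ} (hk : 0 < k) (hG : G.Connected)
    (htau : k ≤ G.tau) : 2 ≤ G.verts.card := by
  have h1 : 1 ≤ G.verts.card := Finset.card_pos.mpr hG.1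
  by_contra h
  have hcard : G.verts.card = 1 := by omega
  have htree : ∀ m, G.HasTrees m := by
    intro m
    refine ⟨fun _ => ⟨G.verts, ∅, G.ends, by simp⟩, fun i => ?_, fun i j _ => by simp⟩
    refine ⟨⟨subset_rfl, by simp, by simp⟩, rfl, ⟨hG.1, ?_⟩, by simp [hcard]⟩
    intro a ha b hb
    obtain ⟨v, hv⟩ := Finset.card_eq_one.mp hcard
    rw [hv, Finset.mem_singleton] at ha hb
    rw [ha, hb]
    exact Relation.ReflTransGen.refl
  have hnb : ¬ BddAbove {m | G.HasTrees m} := by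
    rintro ⟨n, hn⟩
    have := hn (htree (n + 1))
    omega
  have : G.tau = 0 := by
    rw [MG.tau, csSup_of_not_bddAbove hnb, csSup_empty]
    rfl
  omega

end MG

/-- For a connected multigraph with `τ(G) ≥ k`, no edge `e` satisfies
`τ(G−e) ≥ k` iff `d(G) = k`, i.e. `|E(G)| = k(|V(G)|−1)`. -/
theorem stmt15 {α β : Type} [DecidableEq α] [DecidableEq β]
    (k : ℕ) (hk : 0 < k) (G : MG α β) (hG : G.Connected) (htau : k ≤ MG.tau G) :
    (∀ e ∈ G.edges, MG.tau (G.deleteEdges {e}) < k) ↔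
      G.edges.card = k * (G.verts.card - 1) := by
  obtain ⟨T, hT1, hT2⟩ := MG.hasTrees_of_le_tau htau
  have h2 := MG.two_le_verts hk hG htau
  obtain ⟨hBcard, hBsub⟩ := MG.biUnion_card T hT1 hT2
  constructor
  · intro h
    by_contra hne
    have hle : k * (G.verts.card - 1) ≤ G.edges.card := hBcard ▸ Finset.card_le_card hBsub
    have hlt : (Finset.univ.biUnion fun i => (T i).edges).card < G.edges.card := by omega
    obtain ⟨e, he, heB⟩ := Finset.not_subset.mp
      (fun hsub => absurd (Finset.card_le_card hsub) (not_le.mpr hlt))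
    have hHT : (G.deleteEdges {e}).HasTrees k := by
      refine ⟨T, fun i => ?_, hT2⟩
      obtain ⟨⟨hv, hes, hends⟩, hveq, hconn, hcard⟩ := hT1 i
      refine ⟨⟨hv, ?_, hends⟩, hveq, hconn, hcard⟩
      intro f hf
      simp only [MG.deleteEdges, Finset.mem_sdiff, Finset.mem_singleton]
      exact ⟨hes hf, fun hfe => heB (hfe ▸ Finset.mem_biUnion.mpr ⟨i, Finset.mem_univ i, hf⟩)⟩
    have hbdd : BddAbove {m | (G.deleteEdges {e}).HasTrees m} := MG.bddAbove_hasTrees h2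
    have : k ≤ MG.tau (G.deleteEdges {e}) := le_csSup hbdd hHT
    exact absurd this (not_le.mpr (h e he))
  · intro hEq e he
    by_contra hge
    push_neg at hge
    obtain ⟨S, hS1, hS2⟩ := MG.hasTrees_of_le_tau hge
    obtain ⟨hc, hsub⟩ := MG.biUnion_card S hS1 hS2
    have hv : (G.deleteEdges {e}).verts = G.verts := rfl
    rw [hv] at hc
    have h1 : (Finset.univ.biUnion fun i => (S i).edges).card ≤ (G.edges \ {e}).card :=
      Finset.card_le_card hsub
    have h2' : (G.edges \ {e}).card = G.edges.card - 1 := by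
      rw [Finset.card_sdiff_of_subset (by simpa using he)]
      simp
    have h3 : 1 ≤ G.edges.card := Finset.card_pos.mpr ⟨e, he⟩
    rw [hc, ← hEq] at h1
    omega
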